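/- SDCA convergence for smooth losses (Theorem 2, first part): Assume each φ_i is (1/γ)-smooth and convex (γ > 0), together with the standing assumptions, and run the SDCA process with α^(0) = 0. Let ε_P > 0. If T ≥ (n + 1/(λγ)) · log((n + 1/(λγ)) / ε_P), then E[P(w^(T)) − D(α^(T))] ≤ ε_P. -/

import Mathlib

open scoped BigOperators RealInnerProductSpace
open Finset

/-- The convex conjugate `φ*(u) = sup_z (z*u - φ z)` (as a real number; junk value
when the supremum is not finite). -/
noncomputable def fconj (φ : ℝ → ℝ) (u : ℝ) : ℝ := ⨆ z : ℝ, (z * u - φ z)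

/-- `φ*(u) < ∞`, i.e. the defining supremum of the conjugate is finite. -/
def FiniteConj (φ : ℝ → ℝ) (u : ℝ) : Prop :=
  BddAbove (Set.range fun z => z * u - φ z)

/-- `g ∈ ∂φ(a)`: `g` is a subgradient of `φ` at `a`. -/
def IsSubgrad (φ : ℝ → ℝ) (a g : ℝ) : Prop :=
  ∀ b, φ a + g * (b - a) ≤ φ b

/-- `u ∈ ∂φ*(b)`: `u` is a subgradient of the conjugate `φ*` at `b`
(the subgradient inequality being required at all points where `φ*` is finite). -/
def ConjSubgrad (φ : ℝ → ℝ) (b u : ℝ) : Prop :=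
  FiniteConj φ b ∧ ∀ v, FiniteConj φ v → fconj φ b + u * (v - b) ≤ fconj φ v

/-- Dual feasibility: `φ_i*(-α_i) < ∞` for all `i`. -/
def Feas {n : ℕ} (φ : Fin n → ℝ → ℝ) (α : Fin n → ℝ) : Prop :=
  ∀ i, FiniteConj (φ i) (-(α i))

/-- `w(α) = (1/(λ n)) ∑ι α_i x_i`. -/
noncomputable def wvec {n d : ℕ} (lam : ℝ) (x : Fin n → EuclideanSpace ℝ (Fin d))
    (α : Fin n → ℝ) : EuclideanSpace ℝ (Fin d) :=
  (1 / (lam * (n : ℝ))) • ∑ i, α i • x i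

/-- The primal objective `P(w)`. -/
noncomputable def primalObj {n d : ℕ} (lam : ℝ) (x : Fin n → EuclideanSpace ℝ (Fin d))
    (φ : Fin n → ℝ → ℝ) (w : EuclideanSpace ℝ (Fin d)) : ℝ :=
  (1 / (n : ℝ)) * ∑ i, φ i ⟪x i, w⟫ + lam / 2 * ‖w‖ ^ 2

/-- The dual objective `D(α)`. -/
noncomputable def dualObj {n d : ℕ} (lam : ℝ) (x : Fin n → EuclideanSpace ℝ (Fin d))
    (φ : Fin n → ℝ → ℝ) (α : Fin n → ℝ) : ℝ :=
  (1 / (n : ℝ)) * ∑ i, -(fconj (φ i) (-(α i))) - lam / 2 * ‖wvec lam x α‖ ^ 2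

/-- The SDCA trajectory: `α^(0) = α0`, `α^(t+1) = step α^(t) (idx t)`. -/
noncomputable def traj {n : ℕ} (step : (Fin n → ℝ) → Fin n → (Fin n → ℝ))
    (α0 : Fin n → ℝ) (idx : ℕ → Fin n) : ℕ → (Fin n → ℝ)
  | 0 => α0
  | t + 1 => step (traj step α0 idx t) (idx t)

/-- Expectation over the first `t` coordinates of a uniformly random i.i.d. index
sequence, applied to a function `g` of the index sequence (which should depend
only on the first `t` indices). -/
noncomputable def ExpIdx {n : ℕ} (hn : 0 < n) (t : ℕ) (g : (ℕ → Fin n) → ℝ) : ℝ :=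
  (∑ idx : Fin t → Fin n,
      g (fun k => if h : k < t then idx ⟨k, h⟩ else (⟨0, hn⟩ : Fin n))) / (n : ℝ) ^ t

/-!
If `φ` is `(1/γ)`-smooth then `φ*` is `γ`-strongly convex. Hence moving one dual coordinate
`α_i` the fraction `s = λγn / (1 + λγn)` of the way towards `-φ_i'(x_iᵀ w)` raises `D` by at least
`s/n` times the `i`-th term of the duality gap, the strong-convexity bonus paying exactly for the
quadratic term of `D`. Averaging over the uniformly chosen `i`, one SDCA step raises `D` in
expectation by at least `(P(w) - D(α)) / C`, where `C = n + 1/(λγ)`. With `P(w(α)) ≥ D*` this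
gives both `P - D ≤ C (D* - D)` and the contraction `E[D* - D(α^(t))] ≤ (1 - 1/C)^t (D* - D(0))`,
while `D* - D(0) ≤ P(0) - D(0) ≤ 1`. Finally `C (1 - 1/C)^T ≤ C e^{-T/C} ≤ ε_P`.
-/

section Conjugate

variable {φ : ℝ → ℝ}

lemma le_fconj {u : ℝ} (h : FiniteConj φ u) (z : ℝ) : z * u - φ z ≤ fconj φ u :=
  le_ciSup h z

lemma fconj_le {u B : ℝ} (h : ∀ z, z * u - φ z ≤ B) : fconj φ u ≤ B :=
  ciSup_le h

lemma finiteConj_of_le {u B : ℝ} (h : ∀ z, z * u - φ z ≤ B) : FiniteConj φ u :=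
  ⟨B, by rintro _ ⟨z, rfl⟩; exact h z⟩

lemma ConvexOn.add_deriv_mul_sub_le {S : Set ℝ} {a b : ℝ} (hc : ConvexOn ℝ S φ) (ha : a ∈ S)
    (hb : b ∈ S) (hd : DifferentiableAt ℝ φ a) : φ a + deriv φ a * (b - a) ≤ φ b := by
  rcases lt_trichotomy a b with hab | rfl | hba
  · have h := hc.deriv_le_slope ha hb hab hd
    rw [slope_def_field, le_div_iff₀ (sub_pos.2 hab)] at h
    linarith
  · simp
  · have h := hc.slope_le_deriv hb ha hba hd
    rw [slope_def_field, div_le_iff₀ (sub_pos.2 hba)] at h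
    linarith

/-- `t ↦ L/2 (t - a)² - φ t + φ'(a) t` has monotone derivative, hence is convex, and it is
stationary at `a`. -/
lemma le_add_deriv_mul_sub_add_sq {L : ℝ} (hd : Differentiable ℝ φ)
    (hder : ∀ a b, |deriv φ a - deriv φ b| ≤ L * |a - b|) (a b : ℝ) :
    φ b ≤ φ a + deriv φ a * (b - a) + L / 2 * (b - a) ^ 2 := by
  set h : ℝ → ℝ := fun t => L / 2 * (t - a) ^ 2 - φ t + deriv φ a * t
  have hh : ∀ t, HasDerivAt h (L * (t - a) - deriv φ t + deriv φ a) t := by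
    intro t
    have h2 := ((hasDerivAt_id' t).sub_const a).fun_pow 2
    exact (((h2.const_mul (L / 2)).sub (hd t).hasDerivAt).add
      ((hasDerivAt_id' t).const_mul (deriv φ a))).congr_deriv (by norm_num; ring)
  have hmono : Monotone (deriv h) := by
    intro s t hst
    rw [(hh s).deriv, (hh t).deriv]
    have := (le_abs_self _).trans (hder t s)
    rw [abs_of_nonneg (sub_nonneg.2 hst)] at this
    linarith
  have hconv : ConvexOn ℝ Set.univ h :=
    (hmono.monotoneOn _).convexOn_of_deriv convex_univ
      (fun t _ => (hh t).continuousAt.continuousWithinAt)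
      (fun t _ => (hh t).differentiableAt.differentiableWithinAt)
  have := hconv.add_deriv_mul_sub_le (Set.mem_univ a) (Set.mem_univ b) (hh a).differentiableAt
  rw [(hh a).deriv] at this
  simp only [h] at this
  linarith

lemma mul_deriv_sub_le_mul_deriv_sub {a : ℝ} (hc : ConvexOn ℝ Set.univ φ)
    (hd : DifferentiableAt ℝ φ a) (z : ℝ) : z * deriv φ a - φ z ≤ a * deriv φ a - φ a := by
  linarith [hc.add_deriv_mul_sub_le (Set.mem_univ a) (Set.mem_univ z) hd]

lemma finiteConj_deriv {a : ℝ} (hc : ConvexOn ℝ Set.univ φ) (hd : DifferentiableAt ℝ φ a) :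
    FiniteConj φ (deriv φ a) :=
  finiteConj_of_le (mul_deriv_sub_le_mul_deriv_sub hc hd)

lemma fconj_deriv {a : ℝ} (hc : ConvexOn ℝ Set.univ φ) (hd : DifferentiableAt ℝ φ a) :
    fconj φ (deriv φ a) = a * deriv φ a - φ a :=
  le_antisymm (fconj_le (mul_deriv_sub_le_mul_deriv_sub hc hd))
    (le_fconj (finiteConj_deriv hc hd) a)

end Conjugate

section StrongConvexity

variable {φ : ℝ → ℝ} {γ : ℝ}

/-- Pointwise form of the `γ`-strong convexity of `φ*`: test the suprema defining `φ* u` and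
`φ* v` at `z + (1 - s) γ (u - v)` and `z - s γ (u - v)`, and bound `φ` there by the quadratic
upper bound at `z`. -/
lemma mul_convex_comb_sub_le_fconj (hγ : 0 < γ) (hd : Differentiable ℝ φ)
    (hder : ∀ a b, |deriv φ a - deriv φ b| ≤ (1 / γ) * |a - b|)
    {u v s : ℝ} (hu : FiniteConj φ u) (hv : FiniteConj φ v) (hs0 : 0 ≤ s) (hs1 : s ≤ 1) (z : ℝ) :
    z * (s * u + (1 - s) * v) - φ z ≤
      s * fconj φ u + (1 - s) * fconj φ v - γ / 2 * (s * (1 - s) * (u - v) ^ 2) := by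
  have descent : ∀ r, φ (z + γ * r) ≤ φ z + deriv φ z * (γ * r) + γ / 2 * r ^ 2 := by
    intro r
    have := le_add_deriv_mul_sub_add_sq hd hder z (z + γ * r)
    have e : 1 / γ / 2 * (γ * r) ^ 2 = γ / 2 * r ^ 2 := by field_simp
    rwa [add_sub_cancel_left, e] at this
  have hA := le_fconj hu (z + γ * ((1 - s) * (u - v)))
  have hB := le_fconj hv (z + γ * (-s * (u - v)))
  have hA' := descent ((1 - s) * (u - v))
  have hB' := descent (-s * (u - v))
  nlinarith [mul_le_mul_of_nonneg_left hA hs0, mul_le_mul_of_nonneg_left hB (sub_nonneg.2 hs1),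
    mul_le_mul_of_nonneg_left hA' hs0, mul_le_mul_of_nonneg_left hB' (sub_nonneg.2 hs1)]

lemma fconj_sub_fconj_convex_comb_ge (hγ : 0 < γ) (hc : ConvexOn ℝ Set.univ φ)
    (hd : Differentiable ℝ φ) (hder : ∀ a b, |deriv φ a - deriv φ b| ≤ (1 / γ) * |a - b|)
    {β s : ℝ} (hβ : FiniteConj φ (-β)) (hs0 : 0 ≤ s) (hs1 : s ≤ 1) (a : ℝ) :
    FiniteConj φ (-((1 - s) * β - s * deriv φ a)) ∧
      s * (φ a + fconj φ (-β) + β * a) + γ / 2 * (s * (1 - s) * (deriv φ a + β) ^ 2) ≤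
        fconj φ (-β) - fconj φ (-((1 - s) * β - s * deriv φ a))
          - ((1 - s) * β - s * deriv φ a - β) * a := by
  have hcomb : -((1 - s) * β - s * deriv φ a) = s * deriv φ a + (1 - s) * -β := by ring
  have key := mul_convex_comb_sub_le_fconj hγ hd hder (finiteConj_deriv hc (hd a)) hβ hs0 hs1
  rw [hcomb]
  refine ⟨finiteConj_of_le key, ?_⟩
  have := fconj_le key
  rw [fconj_deriv hc (hd a), sub_neg_eq_add] at this
  linarith

end StrongConvexity

lemma sum_update_sub_sum {ι R M : Type*} [Fintype ι] [DecidableEq ι] [AddCommGroup M]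
    (f : ι → R → M) (α : ι → R) (i : ι) (c : R) :
    ∑ j, f j (Function.update α i c j) - ∑ j, f j (α j) = f i c - f i (α i) := by
  rw [← Finset.sum_sub_distrib, Finset.sum_eq_single i (fun j _ hj => by simp [hj]) (by simp),
    Function.update_self]

section DualObjective

variable {n d : ℕ} (lam : ℝ) (x : Fin n → EuclideanSpace ℝ (Fin d)) (φ : Fin n → ℝ → ℝ)

lemma wvec_update (α : Fin n → ℝ) (i : Fin n) (c : ℝ) :
    wvec lam x (Function.update α i c) = wvec lam x α + ((c - α i) / (lam * n)) • x i := by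
  have hsum : ∑ j, Function.update α i c j • x j = ∑ j, α j • x j + (c - α i) • x i := by
    rw [← sub_eq_iff_eq_add', sum_update_sub_sum (fun j a => a • x j), sub_smul]
  rw [wvec, wvec, hsum, smul_add, smul_smul, one_div_mul_eq_div]

lemma dualObj_update (hlam : lam ≠ 0) (α : Fin n → ℝ) (i : Fin n) (c : ℝ) :
    dualObj lam x φ (Function.update α i c) = dualObj lam x φ α
      + 1 / n * (fconj (φ i) (-α i) - fconj (φ i) (-c) - (c - α i) * ⟪x i, wvec lam x α⟫
        - (c - α i) ^ 2 * ‖x i‖ ^ 2 / (2 * lam * n)) := by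
  have hsum : ∑ j, -fconj (φ j) (-Function.update α i c j)
      = ∑ j, -fconj (φ j) (-α j) + (fconj (φ i) (-α i) - fconj (φ i) (-c)) := by
    rw [← sub_eq_iff_eq_add', sum_update_sub_sum (fun j a => -fconj (φ j) (-a))]
    ring
  rw [dualObj, dualObj, hsum, wvec_update, norm_add_sq_real, norm_smul, real_inner_smul_right,
    real_inner_comm, Real.norm_eq_abs, mul_pow, sq_abs]
  field_simp
  ring

lemma sum_mul_inner_eq (hln : lam * n ≠ 0) (α : Fin n → ℝ) (w : EuclideanSpace ℝ (Fin d)) :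
    ∑ i, α i * ⟪x i, w⟫ = lam * n * ⟪wvec lam x α, w⟫ := by
  rw [wvec, real_inner_smul_left, sum_inner, ← mul_assoc, mul_one_div_cancel hln, one_mul]
  simp_rw [real_inner_smul_left]

lemma dualObj_le_primalObj (hn : 0 < n) (hlam : 0 < lam) {α : Fin n → ℝ} (hα : Feas φ α)
    (w : EuclideanSpace ℝ (Fin d)) : dualObj lam x φ α ≤ primalObj lam x φ w := by
  have hn' : (0 : ℝ) < n := Nat.cast_pos.2 hn
  have hconj : ∑ i, -fconj (φ i) (-α i) ≤ ∑ i, φ i ⟪x i, w⟫ + lam * n * ⟪wvec lam x α, w⟫ := by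
    rw [← sum_mul_inner_eq lam x (by positivity), ← Finset.sum_add_distrib]
    refine Finset.sum_le_sum fun i _ => ?_
    linarith [le_fconj (hα i) ⟪x i, w⟫]
  have hinner : ⟪wvec lam x α, w⟫ ≤ ‖wvec lam x α‖ ^ 2 / 2 + ‖w‖ ^ 2 / 2 := by
    nlinarith [real_inner_le_norm (wvec lam x α) w, sq_nonneg (‖wvec lam x α‖ - ‖w‖)]
  have hD : 1 / n * ∑ i, -fconj (φ i) (-α i)
      ≤ 1 / n * ∑ i, φ i ⟪x i, w⟫ + lam * ⟪wvec lam x α, w⟫ :=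
    calc 1 / n * ∑ i, -fconj (φ i) (-α i)
        ≤ 1 / n * (∑ i, φ i ⟪x i, w⟫ + lam * n * ⟪wvec lam x α, w⟫) := by gcongr
      _ = 1 / n * ∑ i, φ i ⟪x i, w⟫ + lam * ⟪wvec lam x α, w⟫ := by field_simp
  rw [dualObj, primalObj]
  linarith [mul_le_mul_of_nonneg_left hinner hlam.le]

lemma primalObj_sub_dualObj (hln : lam * n ≠ 0) (α : Fin n → ℝ) :
    primalObj lam x φ (wvec lam x α) - dualObj lam x φ α
      = 1 / n * ∑ i, (φ i ⟪x i, wvec lam x α⟫ + fconj (φ i) (-α i)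
          + α i * ⟪x i, wvec lam x α⟫) := by
  have hn : (n : ℝ) ≠ 0 := right_ne_zero_of_mul hln
  rw [primalObj, dualObj, Finset.sum_add_distrib, Finset.sum_add_distrib,
    sum_mul_inner_eq lam x hln, real_inner_self_eq_norm_sq, Finset.sum_neg_distrib]
  field_simp
  ring

end DualObjective

section CoordinateAscent

variable {n d : ℕ} {lam γ : ℝ} {x : Fin n → EuclideanSpace ℝ (Fin d)} {φ : Fin n → ℝ → ℝ}

/-- The witness is `c = (1 - s) α_i - s φ_i'(x_iᵀ w)` with `s = λγn / (1 + λγn)`, so that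
`s / n = (n + 1/(λγ))⁻¹`; this `s` makes the strong-convexity bonus `γ/2 s (1 - s) (…)²` pay for
the loss `(c - α_i)² ‖x_i‖² / (2λn²)` in the quadratic part of `D`. -/
lemma exists_dualObj_update_ge (hn : 0 < n) (hlam : 0 < lam) (hγ : 0 < γ)
    (hconv : ∀ i, ConvexOn ℝ Set.univ (φ i)) (hdiff : ∀ i, Differentiable ℝ (φ i))
    (hder : ∀ i, ∀ a b : ℝ, |deriv (φ i) a - deriv (φ i) b| ≤ (1 / γ) * |a - b|)
    (hx : ∀ i, ‖x i‖ ≤ 1) {α : Fin n → ℝ} (hα : Feas φ α) (i : Fin n) :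
    ∃ c, Feas φ (Function.update α i c) ∧
      dualObj lam x φ α + (n + 1 / (lam * γ))⁻¹ *
          (φ i ⟪x i, wvec lam x α⟫ + fconj (φ i) (-α i) + α i * ⟪x i, wvec lam x α⟫)
        ≤ dualObj lam x φ (Function.update α i c) := by
  set s := lam * γ * n / (1 + lam * γ * n) with hs
  have hs0 : 0 ≤ s := by positivity
  have hs1 : s ≤ 1 := by rw [hs, div_le_one (by positivity)]; linarith
  set a := ⟪x i, wvec lam x α⟫
  obtain ⟨hfeas, hgain⟩ :=
    fconj_sub_fconj_convex_comb_ge hγ (hconv i) (hdiff i) (hder i) (hα i) hs0 hs1 a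
  refine ⟨(1 - s) * α i - s * deriv (φ i) a,
    (Function.forall_update_iff α fun j v => FiniteConj (φ j) (-v)).2 ⟨hfeas, fun j _ => hα j⟩, ?_⟩
  have hquad : ((1 - s) * α i - s * deriv (φ i) a - α i) ^ 2 * ‖x i‖ ^ 2 / (2 * lam * n)
      ≤ γ / 2 * (s * (1 - s) * (deriv (φ i) a + α i) ^ 2) := by
    have hnorm : ‖x i‖ ^ 2 ≤ 1 := pow_le_one₀ (norm_nonneg _) (hx i)
    calc _ ≤ ((1 - s) * α i - s * deriv (φ i) a - α i) ^ 2 * 1 / (2 * lam * n) := by gcongr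
      _ = _ := by rw [hs]; field_simp; ring
  have hcoef : (n + 1 / (lam * γ))⁻¹ = 1 / n * s := by rw [hs]; field_simp; ring
  rw [dualObj_update lam x φ hlam.ne', hcoef, mul_assoc]
  gcongr
  linarith

lemma dualObj_add_gap_le_avg_step (hn : 0 < n) (hlam : 0 < lam) (hγ : 0 < γ)
    (hconv : ∀ i, ConvexOn ℝ Set.univ (φ i)) (hdiff : ∀ i, Differentiable ℝ (φ i))
    (hder : ∀ i, ∀ a b : ℝ, |deriv (φ i) a - deriv (φ i) b| ≤ (1 / γ) * |a - b|)
    (hx : ∀ i, ‖x i‖ ≤ 1) {step : (Fin n → ℝ) → Fin n → (Fin n → ℝ)}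
    (hstep_max : ∀ α i c, Feas φ (Function.update α i c) →
      dualObj lam x φ (Function.update α i c) ≤ dualObj lam x φ (step α i))
    {α : Fin n → ℝ} (hα : Feas φ α) :
    dualObj lam x φ α + (n + 1 / (lam * γ))⁻¹ *
        (primalObj lam x φ (wvec lam x α) - dualObj lam x φ α)
      ≤ 1 / n * ∑ j, dualObj lam x φ (step α j) := by
  have hn' : (n : ℝ) ≠ 0 := Nat.cast_ne_zero.2 hn.ne'
  rw [primalObj_sub_dualObj lam x φ (mul_ne_zero hlam.ne' hn')]
  calc _ = 1 / n * ∑ j, (dualObj lam x φ α + (n + 1 / (lam * γ))⁻¹ *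
          (φ j ⟪x j, wvec lam x α⟫ + fconj (φ j) (-α j) + α j * ⟪x j, wvec lam x α⟫)) := by
        rw [Finset.sum_add_distrib (f := fun _ => dualObj lam x φ α), ← Finset.mul_sum,
          Finset.sum_const, Finset.card_univ, Fintype.card_fin, nsmul_eq_mul]
        field_simp
    _ ≤ 1 / n * ∑ j, dualObj lam x φ (step α j) := by
        gcongr with j
        obtain ⟨c, hc, hgain⟩ :=
          exists_dualObj_update_ge hn hlam hγ hconv hdiff hder hx hα j
        exact hgain.trans (hstep_max α j c hc)

end CoordinateAscent

section DualOptimum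

variable {n d : ℕ} (lam : ℝ) (x : Fin n → EuclideanSpace ℝ (Fin d)) (φ : Fin n → ℝ → ℝ)

noncomputable def dualOpt : ℝ := sSup (dualObj lam x φ '' {α | Feas φ α})

lemma dualObj_le_dualOpt (hn : 0 < n) (hlam : 0 < lam) {α : Fin n → ℝ} (hα : Feas φ α) :
    dualObj lam x φ α ≤ dualOpt lam x φ :=
  le_csSup ⟨primalObj lam x φ 0, by
    rintro _ ⟨β, hβ, rfl⟩
    exact dualObj_le_primalObj lam x φ hn hlam hβ 0⟩ ⟨α, hα, rfl⟩

lemma dualOpt_le_primalObj (hn : 0 < n) (hlam : 0 < lam) {α : Fin n → ℝ} (hα : Feas φ α)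
    (w : EuclideanSpace ℝ (Fin d)) : dualOpt lam x φ ≤ primalObj lam x φ w :=
  csSup_le ⟨_, α, hα, rfl⟩ (by
    rintro _ ⟨β, hβ, rfl⟩
    exact dualObj_le_primalObj lam x φ hn hlam hβ w)

end DualOptimum

section Expectation

variable {n : ℕ} (hn : 0 < n)

lemma ExpIdx_mono {t : ℕ} {f g : (ℕ → Fin n) → ℝ} (h : ∀ idx, f idx ≤ g idx) :
    ExpIdx hn t f ≤ ExpIdx hn t g := by
  unfold ExpIdx
  gcongr with v
  exact h _

lemma ExpIdx_const_mul {t : ℕ} (c : ℝ) (f : (ℕ → Fin n) → ℝ) :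
    ExpIdx hn t (fun idx => c * f idx) = c * ExpIdx hn t f := by
  simp only [ExpIdx, ← Finset.mul_sum, mul_div_assoc]

variable (step : (Fin n → ℝ) → Fin n → (Fin n → ℝ)) (α0 : Fin n → ℝ)

lemma traj_congr {t : ℕ} {idx idx' : ℕ → Fin n} (h : ∀ k < t, idx k = idx' k) :
    traj step α0 idx t = traj step α0 idx' t := by
  induction t with
  | zero => rfl
  | succ t ih =>
    simp only [traj]
    rw [ih fun k hk => h k (hk.trans t.lt_succ_self), h t t.lt_succ_self]

lemma traj_mem {S : Set (Fin n → ℝ)} (h0 : α0 ∈ S) (hS : ∀ α i, α ∈ S → step α i ∈ S)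
    (idx : ℕ → Fin n) (t : ℕ) : traj step α0 idx t ∈ S := by
  induction t with
  | zero => exact h0
  | succ t ih => exact hS _ _ ih

/-- Tower property: the last index is uniform and independent of the first `t`. -/
lemma ExpIdx_traj_succ {t : ℕ} (F : (Fin n → ℝ) → ℝ) :
    ExpIdx hn (t + 1) (fun idx => F (traj step α0 idx (t + 1)))
      = ExpIdx hn t (fun idx => 1 / n * ∑ j, F (step (traj step α0 idx t) j)) := by
  unfold ExpIdx
  rw [← (Fin.snocEquiv fun _ => Fin n).sum_comp, Fintype.sum_prod_type, Finset.sum_comm,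
    ← Finset.mul_sum, one_div_mul_eq_div, div_div, pow_succ, mul_comm ((n : ℝ) ^ t)]
  congr 2 with v
  refine Finset.sum_congr rfl fun j _ => ?_
  simp only [Fin.snocEquiv_apply, traj, lt_add_one, dif_pos]
  have hprefix : traj step α0
        (fun k => if h : k < t + 1 then Fin.snoc (α := fun _ => Fin n) v j ⟨k, h⟩ else ⟨0, hn⟩) t
      = traj step α0 (fun k => if h : k < t then v ⟨k, h⟩ else ⟨0, hn⟩) t :=
    traj_congr step α0 fun k hk => by
      rw [dif_pos hk, dif_pos (hk.trans t.lt_succ_self)]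
      exact Fin.snoc_castSucc (α := fun _ => Fin n) j v ⟨k, hk⟩
  rw [hprefix]
  congr 2
  exact Fin.snoc_last (α := fun _ => Fin n) ..

lemma ExpIdx_traj_le_pow {S : Set (Fin n → ℝ)} {E : (Fin n → ℝ) → ℝ} {q : ℝ} (hq : 0 ≤ q)
    (h0 : α0 ∈ S) (hS : ∀ α i, α ∈ S → step α i ∈ S)
    (hE : ∀ α ∈ S, 1 / n * ∑ j, E (step α j) ≤ q * E α) (t : ℕ) :
    ExpIdx hn t (fun idx => E (traj step α0 idx t)) ≤ q ^ t * E α0 := by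
  induction t with
  | zero => simp [ExpIdx, traj]
  | succ t ih =>
    calc ExpIdx hn (t + 1) (fun idx => E (traj step α0 idx (t + 1)))
        ≤ ExpIdx hn t (fun idx => q * E (traj step α0 idx t)) := by
          rw [ExpIdx_traj_succ]
          exact ExpIdx_mono hn fun idx => hE _ (traj_mem step α0 h0 hS idx t)
      _ = q * ExpIdx hn t (fun idx => E (traj step α0 idx t)) := ExpIdx_const_mul hn q _
      _ ≤ q ^ (t + 1) * E α0 := by
          rw [pow_succ', mul_assoc]
          exact mul_le_mul_of_nonneg_left ih hq

end Expectation

section ZeroInitialization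

variable {n d : ℕ} {lam : ℝ} {x : Fin n → EuclideanSpace ℝ (Fin d)} {φ : Fin n → ℝ → ℝ}

lemma fconj_zero_nonpos {ψ : ℝ → ℝ} (hψ : ∀ a, 0 ≤ ψ a) : fconj ψ 0 ≤ 0 :=
  fconj_le fun z => by linarith [hψ z, mul_zero z]

lemma feas_zero (hφ0 : ∀ i a, 0 ≤ φ i a) : Feas φ (fun _ => 0) :=
  fun i => finiteConj_of_le (B := 0) fun z => by linarith [hφ0 i z, mul_zero z, neg_zero (G := ℝ)]

lemma dualObj_zero_nonneg (hφ0 : ∀ i a, 0 ≤ φ i a) : 0 ≤ dualObj lam x φ (fun _ => 0) := by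
  have hsum : 0 ≤ ∑ i, -fconj (φ i) (-0) :=
    Finset.sum_nonneg fun i _ => by rw [neg_zero]; linarith [fconj_zero_nonpos (hφ0 i)]
  simp only [dualObj, wvec, zero_smul, Finset.sum_const_zero, smul_zero, norm_zero]
  rw [zero_pow two_ne_zero, mul_zero, sub_zero]
  positivity

lemma primalObj_zero_le_one (hn : 0 < n) (hφ1 : ∀ i, φ i 0 ≤ 1) : primalObj lam x φ 0 ≤ 1 := by
  have hn' : (0 : ℝ) < n := Nat.cast_pos.2 hn
  have hsum : ∑ i, φ i 0 ≤ n := by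
    simpa using Finset.sum_le_sum fun i (_ : i ∈ Finset.univ) => hφ1 i
  simp only [primalObj, inner_zero_right, norm_zero, ne_eq, OfNat.ofNat_ne_zero,
    not_false_eq_true, zero_pow, mul_zero, add_zero]
  rw [one_div_mul_eq_div, div_le_one hn']
  exact hsum

end ZeroInitialization

lemma mul_one_sub_inv_pow_le {C ε : ℝ} (hC : 1 ≤ C) (hε : 0 < ε) {T : ℕ}
    (hT : C * Real.log (C / ε) ≤ T) : C * (1 - C⁻¹) ^ T ≤ ε := by
  have hC0 : 0 < C := by linarith
  have hpow : (1 - C⁻¹) ^ T ≤ Real.exp (-(T / C)) :=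
    calc (1 - C⁻¹) ^ T ≤ Real.exp (-C⁻¹) ^ T :=
          pow_le_pow_left₀ (sub_nonneg.2 (inv_le_one_of_one_le₀ hC))
            (by linarith [Real.add_one_le_exp (-C⁻¹)]) T
      _ = Real.exp (-(T / C)) := by rw [← Real.exp_nat_mul]; ring_nf
  have hexp : Real.exp (-(T / C)) ≤ ε / C :=
    calc Real.exp (-(T / C)) ≤ Real.exp (-Real.log (C / ε)) :=
          Real.exp_le_exp.2 (neg_le_neg (by rw [le_div_iff₀ hC0]; linarith))
      _ = ε / C := by rw [Real.exp_neg, Real.exp_log (by positivity), inv_div]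
  calc C * (1 - C⁻¹) ^ T ≤ C * (ε / C) := by gcongr; exact hpow.trans hexp
    _ = ε := mul_div_cancel₀ ε hC0.ne'

section LinearConvergence

variable {n d : ℕ} {lam γ : ℝ} {x : Fin n → EuclideanSpace ℝ (Fin d)} {φ : Fin n → ℝ → ℝ}
  {step : (Fin n → ℝ) → Fin n → (Fin n → ℝ)}

lemma avg_dualObj_step_le_dualOpt (hn : 0 < n) (hlam : 0 < lam)
    (hstep_feas : ∀ α i, Feas φ α → Feas φ (step α i)) {α : Fin n → ℝ} (hα : Feas φ α) :
    1 / n * ∑ j, dualObj lam x φ (step α j) ≤ dualOpt lam x φ :=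
  calc 1 / n * ∑ j, dualObj lam x φ (step α j) ≤ 1 / n * ∑ _j : Fin n, dualOpt lam x φ := by
        gcongr with j
        exact dualObj_le_dualOpt lam x φ hn hlam (hstep_feas α j hα)
    _ = dualOpt lam x φ := by simp [hn.ne']

lemma primalObj_sub_dualObj_le_mul_dualOpt_sub (hn : 0 < n) (hlam : 0 < lam) (hγ : 0 < γ)
    (hconv : ∀ i, ConvexOn ℝ Set.univ (φ i)) (hdiff : ∀ i, Differentiable ℝ (φ i))
    (hder : ∀ i, ∀ a b : ℝ, |deriv (φ i) a - deriv (φ i) b| ≤ (1 / γ) * |a - b|)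
    (hx : ∀ i, ‖x i‖ ≤ 1) (hstep_feas : ∀ α i, Feas φ α → Feas φ (step α i))
    (hstep_max : ∀ α i c, Feas φ (Function.update α i c) →
      dualObj lam x φ (Function.update α i c) ≤ dualObj lam x φ (step α i))
    {α : Fin n → ℝ} (hα : Feas φ α) :
    primalObj lam x φ (wvec lam x α) - dualObj lam x φ α
      ≤ (n + 1 / (lam * γ)) * (dualOpt lam x φ - dualObj lam x φ α) :=
  (inv_mul_le_iff₀ (by positivity)).1 (by
    linarith [dualObj_add_gap_le_avg_step hn hlam hγ hconv hdiff hder hx hstep_max hα,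
      avg_dualObj_step_le_dualOpt (x := x) hn hlam hstep_feas hα])

lemma avg_dualOpt_sub_dualObj_step_le (hn : 0 < n) (hlam : 0 < lam) (hγ : 0 < γ)
    (hconv : ∀ i, ConvexOn ℝ Set.univ (φ i)) (hdiff : ∀ i, Differentiable ℝ (φ i))
    (hder : ∀ i, ∀ a b : ℝ, |deriv (φ i) a - deriv (φ i) b| ≤ (1 / γ) * |a - b|)
    (hx : ∀ i, ‖x i‖ ≤ 1)
    (hstep_max : ∀ α i c, Feas φ (Function.update α i c) →
      dualObj lam x φ (Function.update α i c) ≤ dualObj lam x φ (step α i))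
    {α : Fin n → ℝ} (hα : Feas φ α) :
    1 / n * ∑ j, (dualOpt lam x φ - dualObj lam x φ (step α j))
      ≤ (1 - (n + 1 / (lam * γ))⁻¹) * (dualOpt lam x φ - dualObj lam x φ α) := by
  have hopt := mul_le_mul_of_nonneg_left
    (sub_le_sub_right (dualOpt_le_primalObj lam x φ hn hlam hα (wvec lam x α)) (dualObj lam x φ α))
    (inv_nonneg.2 (by positivity : (0 : ℝ) ≤ n + 1 / (lam * γ)))
  rw [Finset.sum_sub_distrib, Finset.sum_const, Finset.card_univ, Fintype.card_fin, nsmul_eq_mul,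
    mul_sub, ← mul_assoc, one_div_mul_cancel (Nat.cast_ne_zero.2 hn.ne'), one_mul]
  linarith [dualObj_add_gap_le_avg_step hn hlam hγ hconv hdiff hder hx hstep_max hα]

lemma dualOpt_sub_dualObj_zero_le_one (hn : 0 < n) (hlam : 0 < lam)
    (hφ0 : ∀ i a, 0 ≤ φ i a) (hφ1 : ∀ i, φ i 0 ≤ 1) :
    dualOpt lam x φ - dualObj lam x φ (fun _ => 0) ≤ 1 := by
  linarith [dualObj_zero_nonneg (lam := lam) (x := x) hφ0,
    primalObj_zero_le_one (lam := lam) (x := x) hn hφ1,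
    dualOpt_le_primalObj lam x φ hn hlam (feas_zero hφ0) 0]

end LinearConvergence

theorem sdca_smooth_general
    (n d : ℕ) (hn : 0 < n)
    (x : Fin n → EuclideanSpace ℝ (Fin d))
    (φ : Fin n → ℝ → ℝ) (hconv : ∀ i, ConvexOn ℝ Set.univ (φ i))
    (lam : ℝ) (hlam : 0 < lam)
    (γ : ℝ) (hγ : 0 < γ)
    (hdiff : ∀ i, Differentiable ℝ (φ i))
    (hder : ∀ i, ∀ a b : ℝ, |deriv (φ i) a - deriv (φ i) b| ≤ (1 / γ) * |a - b|)
    (hx : ∀ i, ‖x i‖ ≤ 1) (hφ0 : ∀ i a, 0 ≤ φ i a) (hφ1 : ∀ i, φ i 0 ≤ 1)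
    (step : (Fin n → ℝ) → Fin n → (Fin n → ℝ))
    (hstep_feas : ∀ α i, Feas φ α → Feas φ (step α i))
    (hstep_max : ∀ α i c, Feas φ (Function.update α i c) →
      dualObj lam x φ (Function.update α i c) ≤ dualObj lam x φ (step α i))
    (εP : ℝ) (hεP : 0 < εP)
    (T : ℕ)
    (hT : ((n : ℝ) + 1 / (lam * γ)) * Real.log (((n : ℝ) + 1 / (lam * γ)) / εP) ≤ T) :
    ExpIdx hn T (fun idx =>
        primalObj lam x φ (wvec lam x (traj step (fun _ => 0) idx T))
          - dualObj lam x φ (traj step (fun _ => 0) idx T)) ≤ εP := by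
  set C := (n : ℝ) + 1 / (lam * γ)
  have hC : 1 ≤ C := by
    have : 0 < 1 / (lam * γ) := by positivity
    linarith [(Nat.one_le_cast (α := ℝ)).2 hn]
  set E := fun α => dualOpt lam x φ - dualObj lam x φ α
  have hfeas := traj_mem step (fun _ => 0) (S := {α | Feas φ α}) (feas_zero hφ0) hstep_feas
  calc _ ≤ ExpIdx hn T (fun idx => C * E (traj step (fun _ => 0) idx T)) :=
        ExpIdx_mono hn fun idx => primalObj_sub_dualObj_le_mul_dualOpt_sub hn hlam hγ hconv hdiff
          hder hx hstep_feas hstep_max (hfeas idx T)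
    _ = C * ExpIdx hn T (fun idx => E (traj step (fun _ => 0) idx T)) := ExpIdx_const_mul hn C _
    _ ≤ C * ((1 - C⁻¹) ^ T * 1) := by
        have hq : 0 ≤ 1 - C⁻¹ := sub_nonneg.2 (inv_le_one_of_one_le₀ hC)
        gcongr
        refine (ExpIdx_traj_le_pow hn step _ (E := E) hq (feas_zero hφ0) hstep_feas
          (fun α hα => avg_dualOpt_sub_dualObj_step_le hn hlam hγ hconv hdiff hder hx hstep_max hα)
          T).trans ?_
        gcongr
        exact dualOpt_sub_dualObj_zero_le_one hn hlam hφ0 hφ1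
    _ ≤ εP := by rw [mul_one]; exact mul_one_sub_inv_pow_le hC hεP hT

/-- Theorem 2 (first part): SDCA convergence for `(1/γ)`-smooth convex losses,
started at `α⁰ = 0`. If `T ≥ (n + 1/(λγ)) log((n + 1/(λγ))/ε_P)`, then the
expected duality gap at time `T` is at most `ε_P`. -/
theorem sdca_smooth
    (n d : ℕ) (hn : 0 < n)
    (x : Fin n → EuclideanSpace ℝ (Fin d))
    (φ : Fin n → ℝ → ℝ) (hconv : ∀ i, ConvexOn ℝ Set.univ (φ i))
    (lam : ℝ) (hlam : 0 < lam)
    (γ : ℝ) (hγ : 0 < γ)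
    (hdiff : ∀ i, Differentiable ℝ (φ i))
    (hder : ∀ i, ∀ a b : ℝ, |deriv (φ i) a - deriv (φ i) b| ≤ (1 / γ) * |a - b|)
    (hx : ∀ i, ‖x i‖ ≤ 1) (hφ0 : ∀ i a, 0 ≤ φ i a) (hφ1 : ∀ i, φ i 0 ≤ 1)
    (step : (Fin n → ℝ) → Fin n → (Fin n → ℝ))
    (hstep_off : ∀ α i j, j ≠ i → step α i j = α j)
    (hstep_feas : ∀ α i, Feas φ α → Feas φ (step α i))
    (hstep_max : ∀ α i c, Feas φ (Function.update α i c) →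
      dualObj lam x φ (Function.update α i c) ≤ dualObj lam x φ (step α i))
    (εP : ℝ) (hεP : 0 < εP)
    (T : ℕ)
    (hT : ((n : ℝ) + 1 / (lam * γ)) * Real.log (((n : ℝ) + 1 / (lam * γ)) / εP) ≤ T) :
    ExpIdx hn T (fun idx =>
        primalObj lam x φ (wvec lam x (traj step (fun _ => 0) idx T))
          - dualObj lam x φ (traj step (fun _ => 0) idx T)) ≤ εP :=
  sdca_smooth_general n d hn x φ hconv lam hlam γ hγ hdiff hder hx hφ0 hφ1 step hstep_feas hstep_max
    εP hεP T hT
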